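/- arXiv:1111.6211 — 2 statements merged into one kernel-verified Lean document; each statement's English description precedes it below -/
import Mathlib

section
/- Let H be a numerical semigroup with PF(H) = {f_1 < f_2 < ⋯ < f_{t−1} < f_t = F(H)} where t = t(H). Then H is almost symmetric if and only if f_i + f_{t−i} = F(H) for all i ∈ {1, …, t−1}. -/
/-- A numerical semigroup, viewed as a set of integers: a set of nonnegative
integers containing 0, closed under addition, with finite complement in ℕ. -/
def IsNumericalSemigroup (S : Set ℤ) : Prop :=
  (∀ x ∈ S, 0 ≤ x) ∧ 0 ∈ S ∧ (∀ a ∈ S, ∀ b ∈ S, a + b ∈ S) ∧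
    {z : ℤ | 0 ≤ z ∧ z ∉ S}.Finite

/-- The genus: the number of nonnegative integers not in `S`. -/
noncomputable def genus (S : Set ℤ) : ℕ := {z : ℤ | 0 ≤ z ∧ z ∉ S}.ncard

/-- The Frobenius number: the largest integer not in `S`. -/
noncomputable def frob (S : Set ℤ) : ℤ := sSup {z : ℤ | z ∉ S}

/-- The set of pseudo-Frobenius numbers. -/
def PF (S : Set ℤ) : Set ℤ := {x : ℤ | x ∉ S ∧ ∀ h ∈ S, h ≠ 0 → x + h ∈ S}

/-- The type: the number of pseudo-Frobenius numbers. -/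
noncomputable def typ (S : Set ℤ) : ℕ := (PF S).ncard

/-- The multiplicity: the smallest nonzero element of `S`. -/
noncomputable def mult (S : Set ℤ) : ℤ := sInf {z : ℤ | z ∈ S ∧ z ≠ 0}

/-- The Apéry set of `S` with respect to `n`. -/
def apery (S : Set ℤ) (n : ℤ) : Set ℤ := {s ∈ S | s - n ∉ S}

/-- The dual `H* = M - M` of the maximal ideal `M = S \ {0}`. -/
def dual (S : Set ℤ) : Set ℤ :=
  {z : ℤ | ∀ m ∈ S, m ≠ 0 → z + m ∈ S ∧ z + m ≠ 0}

/-- Almost symmetric: `2 g(S) = F(S) + t(S)`. -/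
def AlmostSymmetric (S : Set ℤ) : Prop := 2 * (genus S : ℤ) = frob S + (typ S : ℤ)

/-- Symmetric: `2 g(S) = F(S) + 1`. -/
def SymmetricNS (S : Set ℤ) : Prop := 2 * (genus S : ℤ) = frob S + 1

/-- Pseudo-symmetric: `2 g(S) = F(S) + 2`. -/
def PseudoSymmetric (S : Set ℤ) : Prop := 2 * (genus S : ℤ) = frob S + 2

/-- The set of minimal generators of `S`: nonzero elements not expressible as the
sum of two nonzero elements of `S`. -/
def minGens (S : Set ℤ) : Set ℤ :=
  {x ∈ S | x ≠ 0 ∧ ∀ a ∈ S, ∀ b ∈ S, a ≠ 0 → b ≠ 0 → x ≠ a + b}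

/-- The embedding dimension: the number of minimal generators. -/
noncomputable def embdim (S : Set ℤ) : ℕ := (minGens S).ncard

/-- The gluing `⟨x S₁, y S₂⟩` of two numerical semigroups. -/
def glue (x y : ℤ) (S₁ S₂ : Set ℤ) : Set ℤ :=
  {z : ℤ | ∃ a ∈ S₁, ∃ b ∈ S₂, z = x * a + y * b}

/-!
Write `F` for the Frobenius number and `L` for the set of gaps `x` with `F - x` also a gap.
Pairing each `s ∈ S ∩ [0, F]` with the gap `F - s` gives `2 g = F + 1 + |L|`, and
`PF \ {F} ⊆ L`; hence `S` is almost symmetric iff `L = PF \ {F}`. As `L` is closed under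
`x ↦ F - x`, this forces `PF \ {F}` to be closed under that reflection. Conversely, if it is,
and `x ∈ L`, pick pseudo-Frobenius numbers `p, q` with `p - x, q - (F - x) ∈ S`; then
`p - (F - q) ∈ S` forces `p = F - q`, hence `x = p`. Finally, an increasing sequence whose
range is closed under `x ↦ c - x` pairs off symmetrically: `f_i + f_{m-1-i} = c`.
-/

open Set

section StrictMonoFin

variable {α : Type*} [AddCommGroup α] [LinearOrder α] [IsOrderedAddMonoid α]

theorem StrictMono.add_rev_eq_iff_sub_mem_range {m : ℕ} {g : Fin m → α} (hg : StrictMono g)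
    (c : α) : (∀ i, g i + g i.rev = c) ↔ ∀ x ∈ range g, c - x ∈ range g := by
  constructor
  · rintro h _ ⟨i, rfl⟩
    exact ⟨i.rev, eq_sub_of_add_eq' (h i)⟩
  · intro h
    have hrefl : StrictMono fun i : Fin m => c - g i.rev :=
      fun i j hij => sub_lt_sub_left (hg (Fin.rev_strictAnti hij)) c
    have hrange : range (fun i : Fin m => c - g i.rev) = range g := by
      apply Subset.antisymm
      · rintro _ ⟨i, rfl⟩
        exact h _ ⟨i.rev, rfl⟩
      · rintro _ ⟨i, rfl⟩
        obtain ⟨j, hj⟩ := h _ ⟨i, rfl⟩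
        exact ⟨j.rev, by simp [hj]⟩
    intro i
    rw [← congrFun ((hrefl.range_inj hg).mp hrange) i, sub_add_cancel]

theorem StrictMono.add_eq_of_add_add_two_eq_iff {n : ℕ} {f : Fin n → α} (hf : StrictMono f)
    {c : α} (hc : IsGreatest (range f) c) :
    (∀ i j : Fin n, (i : ℕ) + j + 2 = n → f i + f j = c) ↔
      ∀ x ∈ range f \ {c}, c - x ∈ range f \ {c} := by
  obtain ⟨m, rfl⟩ : ∃ m, n = m + 1 := by
    obtain ⟨⟨k, -⟩, -⟩ := hc
    exact Nat.exists_eq_add_one.mpr k.pos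
  have hlast : f (Fin.last m) = c := by
    obtain ⟨⟨k, rfl⟩, hk⟩ := hc
    exact le_antisymm (hk ⟨_, rfl⟩) (hf.monotone k.le_last)
  have hrange : range (f ∘ Fin.castSucc) = range f \ {c} := by
    rw [range_comp, Fin.range_castSucc, ← hlast, ← image_singleton, ← image_univ,
      ← image_sdiff hf.injective]
    congr 1
    ext i
    simp only [mem_ofPred_eq, mem_sdiff, mem_univ, mem_singleton_iff, true_and, Fin.ext_iff,
      Fin.val_last]
    have := i.is_lt
    omega
  rw [← hrange, ← (hf.comp Fin.strictMono_castSucc).add_rev_eq_iff_sub_mem_range]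
  constructor
  · intro h i
    exact h _ _ (by simp; omega)
  · intro h i j hij
    have hj : j = (Fin.rev ⟨i, by omega⟩).castSucc := Fin.ext (by simp; omega)
    exact hj ▸ h ⟨i, by omega⟩

end StrictMonoFin

theorem eq_of_mem_PF_of_sub_mem {S : Set ℤ} {p q : ℤ} (hp : p ∈ PF S) (hq : q ∈ PF S)
    (hpq : p - q ∈ S) : p = q := by
  by_contra hne
  exact hp.1 (by simpa using hq.2 _ hpq (sub_ne_zero.mpr hne))

def reflGaps (S : Set ℤ) : Set ℤ := {x | x ∉ S ∧ frob S - x ∉ S}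

theorem frob_sub_mem_reflGaps {S : Set ℤ} {x : ℤ} (hx : x ∈ reflGaps S) :
    frob S - x ∈ reflGaps S :=
  ⟨hx.2, by simpa using hx.1⟩

namespace IsNumericalSemigroup

variable {S : Set ℤ}

theorem nonneg (hS : IsNumericalSemigroup S) {a : ℤ} (ha : a ∈ S) : 0 ≤ a := hS.1 a ha

theorem zero_mem (hS : IsNumericalSemigroup S) : 0 ∈ S := hS.2.1

theorem add_mem (hS : IsNumericalSemigroup S) {a b : ℤ} (ha : a ∈ S) (hb : b ∈ S) :
    a + b ∈ S :=
  hS.2.2.1 a ha b hb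

theorem finite_gaps (hS : IsNumericalSemigroup S) : {z | 0 ≤ z ∧ z ∉ S}.Finite := hS.2.2.2

theorem isGreatest_frob (hS : IsNumericalSemigroup S) : IsGreatest {z | z ∉ S} (frob S) := by
  have hbdd : ∃ b, ∀ z, z ∉ S → z ≤ b := by
    obtain ⟨B, hB⟩ := hS.finite_gaps.bddAbove
    exact ⟨max B 0, fun z hz => (le_or_gt 0 z).elim
      (fun h => le_max_of_le_left (hB ⟨h, hz⟩)) (fun h => le_max_of_le_right h.le)⟩
  obtain ⟨F, hF, hmax⟩ := Int.exists_greatest_of_bdd hbdd ⟨-1, fun h => by linarith [hS.nonneg h]⟩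
  rw [show frob S = F from IsGreatest.csSup_eq ⟨hF, hmax⟩]
  exact ⟨hF, hmax⟩

theorem frob_not_mem (hS : IsNumericalSemigroup S) : frob S ∉ S := hS.isGreatest_frob.1

theorem le_frob (hS : IsNumericalSemigroup S) {z : ℤ} (hz : z ∉ S) : z ≤ frob S :=
  hS.isGreatest_frob.2 hz

theorem pos_of_mem (hS : IsNumericalSemigroup S) {h : ℤ} (hh : h ∈ S) (h0 : h ≠ 0) : 0 < h :=
  (hS.nonneg hh).lt_of_ne' h0

theorem isGreatest_frob_PF (hS : IsNumericalSemigroup S) : IsGreatest (PF S) (frob S) := by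
  refine ⟨⟨hS.frob_not_mem, fun h hh h0 => ?_⟩, fun p hp => hS.le_frob hp.1⟩
  by_contra hgap
  linarith [hS.le_frob hgap, hS.pos_of_mem hh h0]

theorem exists_mem_PF_sub_mem (hS : IsNumericalSemigroup S) {x : ℤ} (hx : x ∉ S) :
    ∃ p ∈ PF S, p - x ∈ S := by
  have hbdd : ∃ b, ∀ z, z ∉ S ∧ z - x ∈ S → z ≤ b := ⟨frob S, fun z hz => hS.le_frob hz.1⟩
  obtain ⟨y, ⟨hy, hyx⟩, hmax⟩ :=
    Int.exists_greatest_of_bdd hbdd ⟨x, hx, by simpa using hS.zero_mem⟩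
  refine ⟨y, ⟨hy, fun h hh h0 => ?_⟩, hyx⟩
  by_contra hyh
  have := hmax (y + h) ⟨hyh, by simpa [add_sub_right_comm] using hS.add_mem hyx hh⟩
  linarith [hS.pos_of_mem hh h0]

theorem frob_sub_not_mem_of_mem_PF (hS : IsNumericalSemigroup S) {p : ℤ} (hp : p ∈ PF S)
    (hpF : p ≠ frob S) : frob S - p ∉ S := fun hmem =>
  hS.frob_not_mem (by simpa using hp.2 _ hmem (sub_ne_zero.mpr hpF.symm))

theorem PF_sdiff_frob_subset_reflGaps (hS : IsNumericalSemigroup S) :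
    PF S \ {frob S} ⊆ reflGaps S :=
  fun _ ⟨hp, hpF⟩ => ⟨hp.1, hS.frob_sub_not_mem_of_mem_PF hp hpF⟩

theorem reflGaps_subset_gaps (hS : IsNumericalSemigroup S) :
    reflGaps S ⊆ {z | 0 ≤ z ∧ z ∉ S} :=
  fun x hx => ⟨by linarith [hS.le_frob hx.2], hx.1⟩

theorem finite_reflGaps (hS : IsNumericalSemigroup S) : (reflGaps S).Finite :=
  hS.finite_gaps.subset hS.reflGaps_subset_gaps

theorem finite_PF (hS : IsNumericalSemigroup S) : (PF S).Finite :=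
  (hS.finite_reflGaps.insert (frob S)).subset fun p hp =>
    (em (p = frob S)).elim Or.inl fun hpF => Or.inr (hS.PF_sdiff_frob_subset_reflGaps ⟨hp, hpF⟩)

theorem ncard_inter_Icc_add_genus (hS : IsNumericalSemigroup S) :
    (S ∩ Icc 0 (frob S)).ncard + genus S = (frob S + 1).toNat := by
  have hunion : S ∩ Icc 0 (frob S) ∪ {z | 0 ≤ z ∧ z ∉ S} = Icc 0 (frob S) := by
    ext z
    by_cases hz : z ∈ S
    · simp [hz]
    · simpa [hz] using fun _ => hS.le_frob hz
  rw [genus, ← ncard_union_eq (disjoint_left.mpr fun _ ha hb => hb.2 ha.1)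
    ((finite_Icc _ _).inter_of_right _) hS.finite_gaps, hunion, ← Finset.coe_Icc,
    ncard_coe_finset, Int.card_Icc, sub_zero]

theorem genus_eq_ncard_inter_Icc_add (hS : IsNumericalSemigroup S) :
    genus S = (S ∩ Icc 0 (frob S)).ncard + (reflGaps S).ncard := by
  have hsplit : {z | 0 ≤ z ∧ z ∉ S} = (frob S - ·) '' (S ∩ Icc 0 (frob S)) ∪ reflGaps S := by
    ext z
    constructor
    · rintro ⟨hz0, hz⟩
      by_cases hFz : frob S - z ∈ S
      · exact Or.inl ⟨frob S - z, ⟨hFz, by linarith [hS.le_frob hz], by linarith⟩, by ring⟩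
      · exact Or.inr ⟨hz, hFz⟩
    · rintro (⟨s, ⟨hs, hs0, hsF⟩, rfl⟩ | hz)
      · refine ⟨by linarith, fun hmem => hS.frob_not_mem ?_⟩
        simpa using hS.add_mem hs hmem
      · exact hS.reflGaps_subset_gaps hz
  have hdisj : Disjoint ((frob S - ·) '' (S ∩ Icc 0 (frob S))) (reflGaps S) := by
    rw [disjoint_left]
    rintro _ ⟨s, ⟨hs, -⟩, rfl⟩ hx
    exact hx.2 (by simpa using hs)
  rw [genus, hsplit, ncard_union_eq hdisj (((finite_Icc _ _).inter_of_right _).image _)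
    hS.finite_reflGaps, ncard_image_of_injective _ sub_right_injective]

theorem two_mul_genus_eq (hS : IsNumericalSemigroup S) :
    2 * (genus S : ℤ) = frob S + 1 + (reflGaps S).ncard := by
  have hcount := hS.ncard_inter_Icc_add_genus
  have hsplit := hS.genus_eq_ncard_inter_Icc_add
  have hgap : (-1 : ℤ) ∉ S := fun h => by linarith [hS.nonneg h]
  have hF : ((frob S + 1).toNat : ℤ) = frob S + 1 :=
    Int.toNat_of_nonneg (by linarith [hS.le_frob hgap])
  omega

theorem almostSymmetric_iff_reflGaps_eq (hS : IsNumericalSemigroup S) :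
    AlmostSymmetric S ↔ reflGaps S = PF S \ {frob S} := by
  have hcard : ((PF S \ {frob S}).ncard : ℤ) + 1 = typ S := by
    rw [ncard_sdiff_singleton_of_mem hS.isGreatest_frob_PF.1, typ]
    have := (ncard_pos hS.finite_PF).mpr hS.isGreatest_frob_PF.nonempty
    omega
  rw [AlmostSymmetric, hS.two_mul_genus_eq, ← hcard]
  constructor
  · intro h
    exact (eq_of_subset_of_ncard_le hS.PF_sdiff_frob_subset_reflGaps (by omega)
      hS.finite_reflGaps).symm
  · intro h
    rw [h]
    ring

theorem reflGaps_eq_iff (hS : IsNumericalSemigroup S) :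
    reflGaps S = PF S \ {frob S} ↔
      ∀ p ∈ PF S \ {frob S}, frob S - p ∈ PF S \ {frob S} := by
  constructor
  · intro h p hp
    exact h ▸ frob_sub_mem_reflGaps (h ▸ hp)
  · intro h
    refine Subset.antisymm (fun x hx => ?_) hS.PF_sdiff_frob_subset_reflGaps
    obtain ⟨p, hp, hpx⟩ := hS.exists_mem_PF_sub_mem hx.1
    obtain ⟨q, hq, hqx⟩ := hS.exists_mem_PF_sub_mem hx.2
    have hqF : q ≠ frob S := by
      rintro rfl
      exact hx.1 (by simpa using hqx)
    have hpq : p = frob S - q := by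
      refine eq_of_mem_PF_of_sub_mem hp (h q ⟨hq, hqF⟩).1 ?_
      convert hS.add_mem hpx hqx using 1
      ring
    have hxp : x = p := by linarith [hS.nonneg hpx, hS.nonneg hqx]
    subst hxp
    refine ⟨hp, fun hF => hx.2 ?_⟩
    simpa [show x = frob S from hF] using hS.zero_mem

end IsNumericalSemigroup

theorem stmt3 (S : Set ℤ) (hS : IsNumericalSemigroup S)
    (f : Fin (typ S) → ℤ) (hf : StrictMono f) (hrange : Set.range f = PF S) :
    AlmostSymmetric S ↔
      ∀ i j : Fin (typ S), (i : ℕ) + (j : ℕ) + 2 = typ S → f i + f j = frob S := by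
  rw [hS.almostSymmetric_iff_reflGaps_eq, hS.reflGaps_eq_iff, ← hrange]
  exact (hf.add_eq_of_add_add_two_eq_iff (hrange ▸ hS.isGreatest_frob_PF)).symm
end

section
/- Let H = ⟨xH_1, yH_2⟩ be a gluing of numerical semigroups H_1, H_2. Then PF(H) = {xf + yf' + xy : f ∈ PF(H_1), f' ∈ PF(H_2)}; consequently t(H) = t(H_1)·t(H_2) and F(H) = xF(H_1) + yF(H_2) + xy. -/
/-!
Since `x` and `y` are coprime, two representations `x a + y b = x a' + y b'` differ by
`(a', b') = (a + t y, b - t x)`; as `y ∈ S₁` and `x ∈ S₂`, every element `x a + y b` of the gluing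
`H` therefore has `a ∈ S₁` or `b - x ∈ S₂`. Testing a pseudo-Frobenius number `z` of `H` against
`x y` writes `z = x f + y f' + x y`, and the same dichotomy shows `f ∈ PF(S₁)`, `f' ∈ PF(S₂)`, and
conversely. The pair `(f, f')` is determined by `z`: the elements `f + y` lie in the Apéry set of
`S₁` with respect to `y`, whose elements are pairwise incongruent modulo `y`. Finally every
integer above `x F(S₁) + y F(S₂) + x y` has a representation `x a + y b` with
`F(S₂) < b ≤ F(S₂) + x`, which forces `a > F(S₁)`.
-/

namespace IsNumericalSemigroup

variable {S : Set ℤ}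

theorem mul_mem (h : IsNumericalSemigroup S) {a k : ℤ} (ha : a ∈ S) (hk : 0 ≤ k) :
    k * a ∈ S := by
  induction k, hk using Int.leInduction with
  | base => simpa using h.2.1
  | succ n _ ih => simpa [add_mul] using h.2.2.1 _ ih _ ha

theorem bddAbove_compl (h : IsNumericalSemigroup S) : BddAbove {z : ℤ | z ∉ S} := by
  obtain ⟨B, hB⟩ := h.2.2.2.bddAbove
  refine ⟨max B 0, fun z hz => ?_⟩
  rcases le_or_gt 0 z with h0 | h0
  · exact (hB ⟨h0, hz⟩).trans (le_max_left _ _)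
  · exact h0.le.trans (le_max_right _ _)

theorem mem_of_frob_lt (h : IsNumericalSemigroup S) {z : ℤ} (hz : frob S < z) : z ∈ S := by
  by_contra hzS
  exact (le_csSup h.bddAbove_compl hzS).not_gt hz

theorem frob_notMem (h : IsNumericalSemigroup S) : frob S ∉ S :=
  Int.csSup_mem ⟨-1, fun hS => by linarith [h.1 _ hS]⟩ h.bddAbove_compl

theorem frob_mem_PF (h : IsNumericalSemigroup S) : frob S ∈ PF S :=
  ⟨h.frob_notMem, fun m hm hm0 => h.mem_of_frob_lt (by have := h.1 m hm; omega)⟩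

theorem eq_of_mem_apery_of_modEq (h : IsNumericalSemigroup S) {n a b : ℤ} (hn : n ∈ S)
    (ha : a ∈ apery S n) (hb : b ∈ apery S n) (hab : a ≡ b [ZMOD n]) : a = b := by
  obtain ⟨k, hk⟩ := hab.dvd
  rcases lt_trichotomy k 0 with hk0 | rfl | hk0
  · refine absurd ?_ ha.2
    convert h.2.2.1 _ hb.1 _ (h.mul_mem hn (k := -k - 1) (by omega)) using 1
    linear_combination -hk
  · linarith
  · refine absurd ?_ hb.2
    convert h.2.2.1 _ ha.1 _ (h.mul_mem hn (k := k - 1) (by omega)) using 1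
    linear_combination hk

theorem mem_minGens_of_natAbs_eq_one (h : IsNumericalSemigroup S) {a : ℤ} (ha : a ∈ S)
    (ha1 : a.natAbs = 1) : a ∈ minGens S := by
  have ha1 : a = 1 := by have := h.1 a ha; omega
  refine ⟨ha, by omega, fun b hb c hc hb0 hc0 => ?_⟩
  have := h.1 b hb
  have := h.1 c hc
  omega

end IsNumericalSemigroup

theorem frob_eq_of_forall_lt_mem {S : Set ℤ} {m : ℤ} (hm : m ∉ S) (hlt : ∀ z, m < z → z ∈ S) :
    frob S = m :=
  IsGreatest.csSup_eq ⟨hm, fun z hz => not_lt.mp fun hmz => hz (hlt z hmz)⟩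

theorem add_mem_apery_of_mem_PF {S : Set ℤ} {f n : ℤ} (hf : f ∈ PF S) (hn : n ∈ S)
    (hn0 : n ≠ 0) : f + n ∈ apery S n :=
  ⟨hf.2 n hn hn0, by simpa using hf.1⟩

theorem IsCoprime.exists_eq_mul_add_mul_of_lt_le {x y : ℤ} (hco : IsCoprime x y) (hx : 0 < x)
    (z c : ℤ) : ∃ a b, z = x * a + y * b ∧ c < b ∧ b ≤ c + x := by
  obtain ⟨u, v, huv⟩ := hco
  have hdiv := Int.mul_ediv_add_emod (z * v - c - 1) x
  have hr0 := Int.emod_nonneg (z * v - c - 1) hx.ne'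
  have hrx := Int.emod_lt_of_pos (z * v - c - 1) hx
  refine ⟨z * u + y * ((z * v - c - 1) / x), c + 1 + (z * v - c - 1) % x, ?_, by omega, by omega⟩
  linear_combination (-z) * huv - y * hdiv

section Gluing

variable {S₁ S₂ : Set ℤ} {x y : ℤ}

theorem mem_or_sub_mem_of_mem_glue (h₁ : IsNumericalSemigroup S₁) (h₂ : IsNumericalSemigroup S₂)
    (hy : y ∈ S₁) (hx : x ∈ S₂) (hco : IsCoprime x y) (hy0 : y ≠ 0) {a b : ℤ}
    (hab : x * a + y * b ∈ glue x y S₁ S₂) : a ∈ S₁ ∨ b - x ∈ S₂ := by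
  obtain ⟨a', ha', b', hb', heq⟩ := hab
  obtain ⟨t, ht⟩ : y ∣ a' - a :=
    hco.symm.dvd_of_dvd_mul_left ⟨b - b', by linear_combination -heq⟩
  have hb : b - b' = x * t := mul_left_cancel₀ hy0 (by linear_combination heq + x * ht)
  rcases le_or_gt t 0 with ht0 | ht0
  · left
    convert h₁.2.2.1 _ ha' _ (h₁.mul_mem hy (k := -t) (by omega)) using 1
    linear_combination -ht
  · right
    convert h₂.2.2.1 _ hb' _ (h₂.mul_mem hx (k := t - 1) (by omega)) using 1
    linear_combination hb

theorem mem_glue_of_lt (h₁ : IsNumericalSemigroup S₁) (h₂ : IsNumericalSemigroup S₂)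
    (hco : IsCoprime x y) (hx : 0 < x) (hy : 0 ≤ y) {z : ℤ}
    (hz : x * frob S₁ + y * frob S₂ + x * y < z) : z ∈ glue x y S₁ S₂ := by
  obtain ⟨a, b, rfl, hb, hbx⟩ := hco.exists_eq_mul_add_mul_of_lt_le hx z (frob S₂)
  have hyb : y * b ≤ y * (frob S₂ + x) := mul_le_mul_of_nonneg_left hbx hy
  have ha : frob S₁ < a := lt_of_mul_lt_mul_left (by linarith) hx.le
  exact ⟨a, h₁.mem_of_frob_lt ha, b, h₂.mem_of_frob_lt hb, rfl⟩

theorem mem_PF_glue (h₁ : IsNumericalSemigroup S₁) (h₂ : IsNumericalSemigroup S₂)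
    (hy : y ∈ S₁) (hx : x ∈ S₂) (hco : IsCoprime x y) (hx0 : x ≠ 0) (hy0 : y ≠ 0) {f f' : ℤ}
    (hf : f ∈ PF S₁) (hf' : f' ∈ PF S₂) : x * f + y * f' + x * y ∈ PF (glue x y S₁ S₂) := by
  refine ⟨fun hz => ?_, ?_⟩
  · have hz' : x * f + y * (f' + x) ∈ glue x y S₁ S₂ := by convert hz using 1; ring
    rcases mem_or_sub_mem_of_mem_glue h₁ h₂ hy hx hco hy0 hz' with hfS | hfS
    · exact hf.1 hfS
    · exact hf'.1 (by simpa using hfS)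
  rintro _ ⟨a, ha, b, hb, rfl⟩ hab0
  by_cases ha0 : a = 0
  · subst ha0
    have hb0 : b ≠ 0 := by rintro rfl; simp at hab0
    exact ⟨f + y, hf.2 y hy hy0, f' + b, hf'.2 b hb hb0, by ring⟩
  · exact ⟨f + a, hf.2 a ha ha0, f' + x + b, h₂.2.2.1 _ (hf'.2 x hx hx0) _ hb, by ring⟩

theorem exists_of_mem_PF_glue (h₁ : IsNumericalSemigroup S₁) (h₂ : IsNumericalSemigroup S₂)
    (hy : y ∈ S₁) (hx : x ∈ S₂) (hco : IsCoprime x y) (hx0 : x ≠ 0) (hy0 : y ≠ 0) {z : ℤ}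
    (hz : z ∈ PF (glue x y S₁ S₂)) : ∃ f ∈ PF S₁, ∃ f' ∈ PF S₂, z = x * f + y * f' + x * y := by
  have hxS : ∀ s ∈ S₁, x * s ∈ glue x y S₁ S₂ := fun s hs => ⟨s, hs, 0, h₂.2.1, by ring⟩
  have hyS : ∀ s ∈ S₂, y * s ∈ glue x y S₁ S₂ := fun s hs => ⟨0, h₁.2.1, s, hs, by ring⟩
  obtain ⟨a, ha, b, hb, heq⟩ := hz.2 _ (hxS y hy) (mul_ne_zero hx0 hy0)
  have hf : a - y ∉ S₁ := fun hS => hz.1 ⟨a - y, hS, b, hb, by linear_combination heq⟩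
  have hf' : b - x ∉ S₂ := fun hS => hz.1 ⟨a, ha, b - x, hS, by linear_combination heq⟩
  refine ⟨a - y, ⟨hf, fun s hs hs0 => ?_⟩, b - x, ⟨hf', fun s hs hs0 => ?_⟩, by linarith⟩
  · have hzs : x * (a - y + s) + y * b ∈ glue x y S₁ S₂ := by
      convert hz.2 _ (hxS s hs) (mul_ne_zero hx0 hs0) using 1; linear_combination -heq
    exact (mem_or_sub_mem_of_mem_glue h₁ h₂ hy hx hco hy0 hzs).resolve_right hf'
  · have hzs : x * (a - y) + y * (b - x + s + x) ∈ glue x y S₁ S₂ := by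
      convert hz.2 _ (hyS s hs) (mul_ne_zero hy0 hs0) using 1; linear_combination -heq
    simpa using (mem_or_sub_mem_of_mem_glue h₁ h₂ hy hx hco hy0 hzs).resolve_left hf

theorem PF_glue (h₁ : IsNumericalSemigroup S₁) (h₂ : IsNumericalSemigroup S₂)
    (hy : y ∈ S₁) (hx : x ∈ S₂) (hco : IsCoprime x y) (hx0 : x ≠ 0) (hy0 : y ≠ 0) :
    PF (glue x y S₁ S₂) = {z : ℤ | ∃ f ∈ PF S₁, ∃ f' ∈ PF S₂, z = x * f + y * f' + x * y} := by
  ext z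
  refine ⟨exists_of_mem_PF_glue h₁ h₂ hy hx hco hx0 hy0, ?_⟩
  rintro ⟨f, hf, f', hf', rfl⟩
  exact mem_PF_glue h₁ h₂ hy hx hco hx0 hy0 hf hf'

theorem injOn_mul_add_mul_PF_prod (h₁ : IsNumericalSemigroup S₁) (hy : y ∈ S₁)
    (hco : IsCoprime x y) (hy0 : y ≠ 0) :
    Set.InjOn (fun p : ℤ × ℤ => x * p.1 + y * p.2 + x * y) (PF S₁ ×ˢ PF S₂) := by
  rintro ⟨f, f'⟩ ⟨hf, -⟩ ⟨g, g'⟩ ⟨hg, -⟩ heq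
  simp only at heq
  have hdvd : y ∣ g - f := hco.symm.dvd_of_dvd_mul_left ⟨f' - g', by linear_combination -heq⟩
  have hfg : f + y = g + y :=
    h₁.eq_of_mem_apery_of_modEq hy (add_mem_apery_of_mem_PF hf hy hy0)
      (add_mem_apery_of_mem_PF hg hy hy0) (Int.modEq_of_dvd (by simpa using hdvd))
  have hfg : f = g := by linarith
  subst hfg
  simp only [Prod.mk.injEq, true_and]
  exact mul_left_cancel₀ hy0 (by linarith)

theorem typ_glue (h₁ : IsNumericalSemigroup S₁) (h₂ : IsNumericalSemigroup S₂)
    (hy : y ∈ S₁) (hx : x ∈ S₂) (hco : IsCoprime x y) (hx0 : x ≠ 0) (hy0 : y ≠ 0) :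
    typ (glue x y S₁ S₂) = typ S₁ * typ S₂ := by
  have himage : PF (glue x y S₁ S₂) =
      (fun p : ℤ × ℤ => x * p.1 + y * p.2 + x * y) '' (PF S₁ ×ˢ PF S₂) := by
    rw [PF_glue h₁ h₂ hy hx hco hx0 hy0]
    ext z
    exact ⟨fun ⟨f, hf, f', hf', hz⟩ => ⟨(f, f'), ⟨hf, hf'⟩, hz.symm⟩,
      fun ⟨⟨f, f'⟩, ⟨hf, hf'⟩, hz⟩ => ⟨f, hf, f', hf', hz.symm⟩⟩
  rw [typ, himage, (injOn_mul_add_mul_PF_prod h₁ hy hco hy0).ncard_image, Set.ncard_prod, typ, typ]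

theorem frob_glue (h₁ : IsNumericalSemigroup S₁) (h₂ : IsNumericalSemigroup S₂)
    (hy : y ∈ S₁) (hx : x ∈ S₂) (hco : IsCoprime x y) (hx0 : x ≠ 0) (hy0 : y ≠ 0) :
    frob (glue x y S₁ S₂) = x * frob S₁ + y * frob S₂ + x * y :=
  frob_eq_of_forall_lt_mem
    (mem_PF_glue h₁ h₂ hy hx hco hx0 hy0 h₁.frob_mem_PF h₂.frob_mem_PF).1
    fun _ => mem_glue_of_lt h₁ h₂ hco ((h₂.1 x hx).lt_of_ne' hx0) (h₁.1 y hy)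

end Gluing

theorem stmt18 (S₁ S₂ : Set ℤ) (h₁ : IsNumericalSemigroup S₁) (h₂ : IsNumericalSemigroup S₂)
    (x y : ℤ) (hy : y ∈ S₁) (hy' : y ∉ minGens S₁)
    (hx : x ∈ S₂) (hx' : x ∉ minGens S₂) (hcop : Int.gcd x y = 1) :
    PF (glue x y S₁ S₂) =
        {z : ℤ | ∃ f ∈ PF S₁, ∃ f' ∈ PF S₂, z = x * f + y * f' + x * y} ∧
      typ (glue x y S₁ S₂) = typ S₁ * typ S₂ ∧
      frob (glue x y S₁ S₂) = x * frob S₁ + y * frob S₂ + x * y := by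
  have hx0 : x ≠ 0 := by
    rintro rfl
    exact hy' (h₁.mem_minGens_of_natAbs_eq_one hy (by simpa using hcop))
  have hy0 : y ≠ 0 := by
    rintro rfl
    exact hx' (h₂.mem_minGens_of_natAbs_eq_one hx (by simpa using hcop))
  have hco : IsCoprime x y := Int.isCoprime_iff_gcd_eq_one.mpr hcop
  exact ⟨PF_glue h₁ h₂ hy hx hco hx0 hy0, typ_glue h₁ h₂ hy hx hco hx0 hy0,
    frob_glue h₁ h₂ hy hx hco hx0 hy0⟩
end
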